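/- Let A, B, C be Banach algebras over 𝕂, let α : A → C and β : B → C be continuous surjective algebra homomorphisms, and let D, γ, δ be the pullback data. Suppose β has a right inverse which is a bounded linear map. Then δ has a right inverse which is a bounded linear map if and only if α has a right inverse which is a bounded linear map. -/

import Mathlib

/- The pullback of two continuous algebra homomorphisms `α : A → C` and `β : B → C`
between (possibly non-unital) Banach algebras, realised as a closed subalgebra of the
Banach-algebra direct sum `A × B` (whose norm is the maximum of the coordinate norms). -/

variable {𝕜 : Type*} [RCLike 𝕜]
variable {A B C : Type*}
  [NonUnitalNormedRing A] [NormedSpace 𝕜 A] [IsScalarTower 𝕜 A A] [SMulCommClass 𝕜 A A]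
  [CompleteSpace A]
  [NonUnitalNormedRing B] [NormedSpace 𝕜 B] [IsScalarTower 𝕜 B B] [SMulCommClass 𝕜 B B]
  [CompleteSpace B]
  [NonUnitalNormedRing C] [NormedSpace 𝕜 C] [IsScalarTower 𝕜 C C] [SMulCommClass 𝕜 C C]
  [CompleteSpace C]

/-- The pullback `D = {(a,b) ∈ A ⊕ B : α(a) = β(b)}`. -/
def pullback (α : A →ₙₐ[𝕜] C) (β : B →ₙₐ[𝕜] C) : NonUnitalSubalgebra 𝕜 (A × B) where
  carrier := {p | α p.1 = β p.2}
  add_mem' := by intro p q hp hq; simp only [Set.mem_setOf_eq] at *; simp [map_add, hp, hq]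
  zero_mem' := by simp
  mul_mem' := by intro p q hp hq; simp only [Set.mem_setOf_eq] at *; simp [map_mul, hp, hq]
  smul_mem' := by intro c p hp; simp only [Set.mem_setOf_eq] at *; simp [map_smul, hp]


/- The square `γ, δ` commutes: `α ∘ γ = β ∘ δ`. So a bounded section `τ` of `δ`, precomposed with
a bounded section `ρ` of `β`, gives the bounded section `γ ∘ τ ∘ ρ` of `α`; conversely, a bounded
section `σ` of `α` gives the bounded section `b ↦ (σ (β b), b)` of `δ`, by the universal property
of the pullback. -/

namespace pullback

variable {A B C E : Type*}
  [NonUnitalNormedRing A] [NormedSpace 𝕜 A] [NonUnitalNormedRing B] [NormedSpace 𝕜 B]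
  [NonUnitalNormedRing C] [NormedSpace 𝕜 C] [NormedAddCommGroup E] [NormedSpace 𝕜 E]
  (α : A →ₙₐ[𝕜] C) (β : B →ₙₐ[𝕜] C)

def fst : pullback α β →L[𝕜] A :=
  (ContinuousLinearMap.fst 𝕜 A B).comp (pullback α β).toSubmodule.subtypeL

def snd : pullback α β →L[𝕜] B :=
  (ContinuousLinearMap.snd 𝕜 A B).comp (pullback α β).toSubmodule.subtypeL

theorem map_fst_eq_map_snd (d : pullback α β) : α (fst α β d) = β (snd α β d) := d.2

variable {α β}

def lift (f : E →L[𝕜] A) (g : E →L[𝕜] B) (h : ∀ x, α (f x) = β (g x)) :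
    E →L[𝕜] pullback α β :=
  (f.prod g).codRestrict (pullback α β).toSubmodule h

theorem rightInverse_fst_comp_comp {ρ : C →L[𝕜] B} (hρ : Function.RightInverse ρ β)
    {τ : B →L[𝕜] pullback α β} (hτ : Function.RightInverse τ (snd α β)) :
    Function.RightInverse ((fst α β).comp (τ.comp ρ)) α := fun c => by
  simp only [ContinuousLinearMap.comp_apply, map_fst_eq_map_snd, hτ (ρ c), hρ c]

theorem exists_rightInverse_snd (hβ : Continuous β) {σ : C →L[𝕜] A}
    (hσ : Function.RightInverse σ α) :
    ∃ τ : B →L[𝕜] pullback α β, Function.RightInverse τ (snd α β) := by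
  let βL : B →L[𝕜] C := ⟨β, hβ⟩
  exact ⟨lift (σ.comp βL) (.id 𝕜 B) fun b => hσ (β b), fun _ => rfl⟩

end pullback

theorem pullback_admissible_iff_general (α : A →ₙₐ[𝕜] C) (β : B →ₙₐ[𝕜] C)
    (hβ : Continuous β)
    (hβsplit : ∃ ρ : C →L[𝕜] B, ∀ c, β (ρ c) = c) :
    (∃ τ : B →L[𝕜] pullback α β, ∀ b, ((τ b : A × B)).2 = b) ↔
    (∃ σ : C →L[𝕜] A, ∀ c, α (σ c) = c) := by
  obtain ⟨ρ, hρ⟩ := hβsplit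
  exact ⟨fun ⟨_, hτ⟩ => ⟨_, pullback.rightInverse_fst_comp_comp hρ hτ⟩,
    fun ⟨_, hσ⟩ => pullback.exists_rightInverse_snd hβ hσ⟩

/-- Suppose `β` has a right inverse which is a bounded linear map. Then the restricted
coordinate projection `δ : D → B, (a,b) ↦ b` has a right inverse which is a bounded
linear map if and only if `α` does. -/
theorem pullback_admissible_iff (α : A →ₙₐ[𝕜] C) (β : B →ₙₐ[𝕜] C)
    (hα : Continuous α) (hβ : Continuous β)
    (hαsurj : Function.Surjective α) (hβsurj : Function.Surjective β)
    (hβsplit : ∃ ρ : C →L[𝕜] B, ∀ c, β (ρ c) = c) :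
    (∃ τ : B →L[𝕜] pullback α β, ∀ b, ((τ b : A × B)).2 = b) ↔
    (∃ σ : C →L[𝕜] A, ∀ c, α (σ c) = c) :=
  pullback_admissible_iff_general α β hβ hβsplit
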